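/- arXiv:1311.6664 — 2 statements merged into one kernel-verified Lean document; each statement's English description precedes it below -/
import Mathlib

section
/- In a configuration of size 4 in which no 3-element subset of [4] is equivalent to [4] (i.e., the only set equivalent to [4] is [4] itself), the equivalence relation is trivial: S ∼ T implies S = T. -/
/-- A configuration of size `k`: an equivalence relation on the subsets of
`[k]` of cardinality greater than 1, satisfying the unioning property. -/
structure Config (k : ℕ) where
  r : Finset (Fin k) → Finset (Fin k) → Prop
  dom : ∀ ⦃S T⦄, r S T → 1 < S.card ∧ 1 < T.card
  refl : ∀ S : Finset (Fin k), 1 < S.card → r S S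
  symm : ∀ ⦃S T⦄, r S T → r T S
  trans : ∀ ⦃S T U⦄, r S T → r T U → r S U
  union : ∀ ⦃S T⦄, r S T → ∀ i : Fin k, r (insert i S) (insert i T)

lemma config_union_set {k : ℕ} (c : Config k) {S T : Finset (Fin k)}
    (h : c.r S T) (A : Finset (Fin k)) : c.r (S ∪ A) (T ∪ A) := by
  induction A using Finset.induction_on with
  | empty => simpa using h
  | @insert a A' ha ih =>
    have := c.union ih a
    simpa [Finset.union_insert] using this

/-- In a configuration of size 4 in which the only set equivalent to `[4]`
is `[4]` itself, the equivalence relation is trivial. -/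
theorem stmt10 (c : Config 4)
    (htop : ∀ S : Finset (Fin 4), c.r S Finset.univ → S = Finset.univ)
    (S T : Finset (Fin 4)) (h : c.r S T) : S = T := by
  have key : ∀ S T : Finset (Fin 4), c.r S T → T ⊆ S := by
    intro S T hST
    have h1 : c.r (S ∪ Tᶜ) (T ∪ Tᶜ) := config_union_set c hST Tᶜ
    rw [Finset.union_compl] at h1
    have h2 := htop _ h1
    intro x hx
    have hxu : x ∈ S ∪ Tᶜ := h2 ▸ Finset.mem_univ x
    rcases Finset.mem_union.mp hxu with h | h
    · exact h
    · exact absurd hx (Finset.mem_compl.mp h)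
  exact Finset.Subset.antisymm (key T S (c.symm h)) (key S T h)
end

section
/- Every configuration of size 3 is determined by which of the three 2-element sets {1,2}, {1,3}, {2,3} are equivalent to {1,2,3}; consequently there are exactly 8 configurations of size 3 and exactly 4 equivalence classes under permutations of [3]. -/
/-- Equivalence of configurations: related by a permutation of `[k]`. -/
def ConfigEquiv {k : ℕ} (c c' : Config k) : Prop :=
  ∃ σ : Equiv.Perm (Fin k), ∀ S T : Finset (Fin k),
    c'.r (S.image σ) (T.image σ) ↔ c.r S T

namespace Stmt13Aux

def q (f : Fin 3 → Prop) (S : Finset (Fin 3)) : Prop := ∀ i ∉ S, f i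

def mk (f : Fin 3 → Prop) : Config 3 where
  r S T := 1 < S.card ∧ 1 < T.card ∧ (S = T ∨ (q f S ∧ q f T))
  dom _ _ h := ⟨h.1, h.2.1⟩
  refl S h := ⟨h, h, Or.inl rfl⟩
  symm {S T} h := ⟨h.2.1, h.1, h.2.2.imp Eq.symm And.symm⟩
  trans {S T U} h1 h2 := by
    refine ⟨h1.1, h2.2.1, ?_⟩
    rcases h1.2.2 with rfl | hq1
    · exact h2.2.2
    · rcases h2.2.2 with rfl | hq2
      · exact Or.inr hq1
      · exact Or.inr ⟨hq1.1, hq2.2⟩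
  union {S T} h i := by
    refine ⟨lt_of_lt_of_le h.1 (Finset.card_le_card (Finset.subset_insert _ _)),
      lt_of_lt_of_le h.2.1 (Finset.card_le_card (Finset.subset_insert _ _)), ?_⟩
    rcases h.2.2 with rfl | ⟨hS, hT⟩
    · exact Or.inl rfl
    · exact Or.inr ⟨fun j hj => hS j (fun hjS => hj (Finset.mem_insert_of_mem hjS)),
        fun j hj => hT j (fun hjT => hj (Finset.mem_insert_of_mem hjT))⟩

def toFun (c : Config 3) : Fin 3 → Prop := fun i => c.r ({i}ᶜ) Finset.univ

lemma d1 : ∀ S : Finset (Fin 3), 1 < S.card → S = Finset.univ ∨ ∃ i, S = {i}ᶜ := by decide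
lemma d2 : ∀ i j : Fin 3, j ∉ ({i}ᶜ : Finset (Fin 3)) → j = i := by decide
lemma d3 : ∀ a b : Fin 3, a ≠ b → insert b ({a}ᶜ : Finset (Fin 3)) = {a}ᶜ := by decide
lemma d4 : ∀ b : Fin 3, insert b ({b}ᶜ : Finset (Fin 3)) = Finset.univ := by decide
lemma d5 : ∀ i : Fin 3, 1 < ({i}ᶜ : Finset (Fin 3)).card := by decide
lemma d6 : ∀ i : Fin 3, ({i}ᶜ : Finset (Fin 3)) ≠ Finset.univ := by decide
lemma d7 : ∀ i : Fin 3, i ∉ ({i}ᶜ : Finset (Fin 3)) := by decide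
lemma d8 : 1 < (Finset.univ : Finset (Fin 3)).card := by decide
lemma dcard : ∀ i : Fin 3, ({i}ᶜ : Finset (Fin 3)).card = 2 := by decide
lemma dimgc : ∀ σ : Equiv.Perm (Fin 3), ∀ i,
    Finset.image σ ({i}ᶜ : Finset (Fin 3)) = {σ i}ᶜ := by decide
lemma dimgu : ∀ σ : Equiv.Perm (Fin 3),
    Finset.image σ (Finset.univ : Finset (Fin 3)) = Finset.univ := by decide

lemma pair_rel_univ (c : Config 3) {a b : Fin 3} (hab : a ≠ b)
    (h : c.r ({a}ᶜ) ({b}ᶜ)) : c.r ({a}ᶜ) Finset.univ := by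
  have := c.union h b
  rwa [d3 a b hab, d4 b] at this

lemma r_iff (c : Config 3) (S T : Finset (Fin 3)) : c.r S T ↔ (mk (toFun c)).r S T := by
  show c.r S T ↔ _ ∧ _ ∧ (_ ∨ _)
  constructor
  · intro h
    obtain ⟨hS, hT⟩ := c.dom h
    refine ⟨hS, hT, ?_⟩
    by_cases hST : S = T
    · exact Or.inl hST
    right
    rcases d1 S hS with rfl | ⟨a, rfl⟩
    · rcases d1 T hT with rfl | ⟨b, rfl⟩
      · exact absurd rfl hST
      · refine ⟨fun j hj => absurd (Finset.mem_univ j) hj, fun j hj => ?_⟩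
        have := d2 b j hj; subst this
        exact c.symm h
    · rcases d1 T hT with rfl | ⟨b, rfl⟩
      · refine ⟨fun j hj => ?_, fun j hj => absurd (Finset.mem_univ j) hj⟩
        have := d2 a j hj; subst this
        exact h
      · have hab : a ≠ b := fun e => hST (by rw [e])
        refine ⟨fun j hj => ?_, fun j hj => ?_⟩
        · have := d2 a j hj; subst this
          exact pair_rel_univ c hab h
        · have := d2 b j hj; subst this
          exact pair_rel_univ c hab.symm (c.symm h)
  · rintro ⟨hS, hT, rfl | ⟨hqS, hqT⟩⟩
    · exact c.refl S hS
    have key : ∀ U : Finset (Fin 3), 1 < U.card → q (toFun c) U → c.r U Finset.univ := by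
      intro U hU hq
      rcases d1 U hU with rfl | ⟨a, rfl⟩
      · exact c.refl _ d8
      · exact hq a (d7 a)
    exact c.trans (key S hS hqS) (c.symm (key T hT hqT))

lemma config_ext {c c' : Config 3} (h : c.r = c'.r) : c = c' := by
  cases c; cases c'
  simp only at h
  subst h
  rfl

lemma left_inv : ∀ c : Config 3, mk (toFun c) = c := by
  intro c
  apply config_ext
  funext S T
  exact propext ((r_iff c S T).symm)

lemma right_inv : ∀ f : Fin 3 → Prop, toFun (mk f) = f := by
  intro f
  funext i
  apply propext
  show (mk f).r ({i}ᶜ) Finset.univ ↔ f i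
  constructor
  · rintro ⟨-, -, he | ⟨hq, -⟩⟩
    · exact absurd he (d6 i)
    · exact hq i (d7 i)
  · intro hf
    refine ⟨d5 i, d8, Or.inr ⟨fun j hj => ?_, fun j hj => absurd (Finset.mem_univ j) hj⟩⟩
    rw [d2 i j hj]; exact hf

def e : Config 3 ≃ (Fin 3 → Prop) := ⟨toFun, mk, left_inv, right_inv⟩

def R (f g : Fin 3 → Prop) : Prop := ∃ σ : Equiv.Perm (Fin 3), ∀ i, g (σ i) ↔ f i

lemma mk_perm (f f' : Fin 3 → Prop) (σ : Equiv.Perm (Fin 3)) (h : ∀ i, f' (σ i) ↔ f i)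
    (S T : Finset (Fin 3)) : (mk f').r (S.image σ) (T.image σ) ↔ (mk f).r S T := by
  have hcard : ∀ U : Finset (Fin 3), (U.image σ).card = U.card :=
    fun U => Finset.card_image_of_injective U σ.injective
  have himg : ∀ U V : Finset (Fin 3), U.image σ = V.image σ ↔ U = V :=
    fun U V => ⟨fun hh => Finset.image_injective σ.injective hh, fun hh => by rw [hh]⟩
  have hq : ∀ U : Finset (Fin 3), q f' (U.image σ) ↔ q f U := by
    intro U
    constructor
    · intro hh i hi
      have hni : σ i ∉ U.image σ := by
        simp only [Finset.mem_image, not_exists, not_and]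
        intro j hj hje
        exact hi (σ.injective hje ▸ hj)
      exact (h i).mp (hh _ hni)
    · intro hh j hj
      have hj' : σ.symm j ∉ U := by
        intro hm
        have : σ (σ.symm j) ∈ U.image σ := Finset.mem_image_of_mem _ hm
        rw [Equiv.apply_symm_apply] at this
        exact hj this
      have h1 := hh _ hj'
      have h2 := (h (σ.symm j)).mpr h1
      rwa [Equiv.apply_symm_apply] at h2
  show (_ ∧ _ ∧ (_ ∨ _)) ↔ (_ ∧ _ ∧ (_ ∨ _))
  rw [hcard S, hcard T]
  exact and_congr_right fun _ => and_congr_right fun _ =>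
    or_congr (himg S T) (and_congr (hq S) (hq T))

lemma ce_iff (c c' : Config 3) : ConfigEquiv c c' ↔ R (toFun c) (toFun c') := by
  constructor
  · rintro ⟨σ, hσ⟩
    refine ⟨σ, fun i => ?_⟩
    have := hσ ({i}ᶜ) Finset.univ
    rwa [dimgc σ i, dimgu σ] at this
  · rintro ⟨σ, hσ⟩
    refine ⟨σ, fun S T => ?_⟩
    rw [r_iff c', r_iff c]
    exact mk_perm _ _ σ hσ S T

def R' (f g : Fin 3 → Bool) : Prop := ∃ σ : Equiv.Perm (Fin 3), ∀ i, g (σ i) = f i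

noncomputable def eb : (Fin 3 → Prop) ≃ (Fin 3 → Bool) :=
  Equiv.arrowCongr (Equiv.refl _) Equiv.propEquivBool

lemma pb_eq (p p' : Prop) :
    (Equiv.propEquivBool p = Equiv.propEquivBool p') ↔ (p ↔ p') :=
  ⟨fun h => iff_of_eq (Equiv.propEquivBool.injective h),
   fun h => congrArg _ (propext h)⟩

lemma R_iff_R' (f g : Fin 3 → Prop) : R f g ↔ R' (eb f) (eb g) := by
  unfold R R' eb
  simp only [Equiv.arrowCongr_apply, Function.comp, Equiv.refl_symm, Equiv.refl_apply]
  exact exists_congr fun σ => forall_congr' fun i => (pb_eq _ _).symm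

def cnt (f : Fin 3 → Bool) : ℕ := (Finset.univ.filter (fun i => f i = true)).card

lemma dcnt : ∀ f : Fin 3 → Bool, cnt f < 4 := by decide

lemma dsound : ∀ f g : Fin 3 → Bool,
    (∃ σ : Equiv.Perm (Fin 3), ∀ i, g (σ i) = f i) ↔ cnt f = cnt g := by decide

lemma dsurj : ∀ n : Fin 4, cnt (fun i => decide ((i : ℕ) < (n : ℕ))) = (n : ℕ) := by decide

def toFin4 (f : Fin 3 → Bool) : Fin 4 := ⟨cnt f, dcnt f⟩

def F : Quot R' → Fin 4 :=
  Quot.lift toFin4 (fun f g h => Fin.ext ((dsound f g).mp h))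

lemma F_bij : Function.Bijective F := by
  constructor
  · intro a b
    induction a using Quot.ind with | _ f =>
    induction b using Quot.ind with | _ g =>
    intro h
    exact Quot.sound ((dsound f g).mpr (congrArg Fin.val h))
  · intro n
    refine ⟨Quot.mk _ (fun i => decide ((i : ℕ) < (n : ℕ))), ?_⟩
    exact Fin.ext (dsurj n)

noncomputable def eQ : Quot (ConfigEquiv (k := 3)) ≃ Fin 4 :=
  ((Quot.congr e ce_iff).trans (Quot.congr eb R_iff_R')).trans (Equiv.ofBijective F F_bij)

end Stmt13Aux

open Stmt13Aux in
/-- A configuration of size 3 is determined by which 2-element subsets of `[3]`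
are equivalent to `{1,2,3}`; there are exactly 8 configurations of size 3, and
exactly 4 equivalence classes under permutations of `[3]`. -/
theorem stmt13 :
    (∀ c c' : Config 3,
      (∀ p : Finset (Fin 3), p.card = 2 → (c.r p Finset.univ ↔ c'.r p Finset.univ)) →
      ∀ S T : Finset (Fin 3), (c.r S T ↔ c'.r S T)) ∧
    Nat.card (Config 3) = 8 ∧
    Nat.card (Quot (ConfigEquiv (k := 3))) = 4 := by
  refine ⟨?_, ?_, ?_⟩
  · intro c c' h S T
    have hf : toFun c = toFun c' := funext fun i => propext (h ({i}ᶜ) (dcard i))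
    have hc : c = c' := by
      have := congrArg mk hf
      rwa [left_inv c, left_inv c'] at this
    rw [hc]
  · have h1 : Nat.card (Config 3) = Nat.card (Fin 3 → Bool) :=
      Nat.card_congr (e.trans eb)
    rw [h1]
    simp [Nat.card_eq_fintype_card]
  · rw [Nat.card_congr eQ]
    simp
end
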